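/- Let K be a field of characteristic zero and F = K(x₁,…,x_ℓ). If f₁, …, f_p ∈ F \ K (p ≥ 2) satisfy c₁f₁ + ⋯ + c_pf_p = 0 for some constants (c₁, …, c_p) ∈ K^p not all zero, then ∂[dlog f₁ : ⋯ : dlog f_p] = 0. -/

import Mathlib

open ExteriorAlgebra MvPolynomial

set_option synthInstance.maxHeartbeats 1000000
set_option maxHeartbeats 1000000

noncomputable def wedgeList (F : Type*) {W : Type*} [Field F] [AddCommGroup W] [Module F W]
    (l : List W) : ExteriorAlgebra F W := (l.map (ι F)).prod

noncomputable def wedge (F : Type*) {W : Type*} [Field F] [AddCommGroup W] [Module F W]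
    {p : ℕ} (ω : Fin p → W) : ExteriorAlgebra F W := wedgeList F (List.ofFn ω)

noncomputable def der (F : Type*) {W : Type*} [Field F] [AddCommGroup W] [Module F W]
    {p : ℕ} (ω : Fin p → W) : ExteriorAlgebra F W :=
  ∑ k : Fin p, (-1 : F) ^ (k : ℕ) • wedgeList F ((List.ofFn ω).eraseIdx k)

/-- The field of rational functions `K(x₁, …, x_ℓ)`. -/
abbrev Fq (K : Type) [Field K] (ℓ : ℕ) : Type := FractionRing (MvPolynomial (Fin ℓ) K)

/-- `dlog f = df / f` with values in the module of Kähler differentials `Ω¹_{F/K}`. -/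
noncomputable def dlog (K : Type) [Field K] (ℓ : ℕ) (f : Fq K ℓ) : Ω[Fq K ℓ⁄K] :=
  f⁻¹ • KaehlerDifferential.D K (Fq K ℓ) f

/-!
Lift each `ωᵢ` to `(ωᵢ, 1)` in `W × F`. Contracting `(ω₁, 1) ∧ ⋯ ∧ (ω_p, 1)` with the second
coordinate and projecting back to `W` gives `∂[ω₁ : ⋯ : ω_p]`. A relation `∑ aᵢ ωᵢ = 0` with
`∑ aᵢ = 0` makes the lifts linearly dependent, so their wedge, hence `∂[ω]`, vanishes. For
`ωᵢ = dlog fᵢ` take `aᵢ = cᵢ fᵢ`: then `∑ aᵢ = 0` is the given relation and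
`∑ aᵢ dlog fᵢ = d(∑ cᵢ fᵢ) = 0`.
-/

open CliffordAlgebra

section Wedge

variable {F W : Type*} [Field F] [AddCommGroup W] [Module F W]

lemma wedgeList_cons (v : W) (l : List W) :
    wedgeList F (v :: l) = ι F v * wedgeList F l := by
  simp [wedgeList]

lemma wedgeList_ofFn {p : ℕ} (ω : Fin p → W) : wedgeList F (List.ofFn ω) = ιMulti F p ω := by
  rw [ιMulti_apply, wedgeList, List.map_ofFn]
  rfl

lemma map_wedgeList {W' : Type*} [AddCommGroup W'] [Module F W'] (g : W →ₗ[F] W')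
    (l : List W) : ExteriorAlgebra.map g (wedgeList F l) = wedgeList F (l.map g) := by
  simp [wedgeList, map_list_prod, Function.comp_def]

lemma der_eq_sum_range {p : ℕ} (ω : Fin p → W) :
    der F ω = ∑ k ∈ Finset.range p, (-1 : F) ^ k • wedgeList F ((List.ofFn ω).eraseIdx k) :=
  Fin.sum_univ_eq_sum_range (fun k => (-1 : F) ^ k • wedgeList F ((List.ofFn ω).eraseIdx k)) p

lemma contractLeft_wedgeList (φ : Module.Dual F W) (l : List W) (hφ : ∀ x ∈ l, φ x = 1) :
    contractLeft (Q := 0) φ (wedgeList F l) =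
      ∑ k ∈ Finset.range l.length, (-1 : F) ^ k • wedgeList F (l.eraseIdx k) := by
  induction l with
  | nil => simp [wedgeList, contractLeft_one]
  | cons v t ih =>
    rw [wedgeList_cons, contractLeft_ι_mul, ih fun x hx => hφ x (List.mem_cons_of_mem v hx),
      hφ v List.mem_cons_self, one_smul, List.length_cons, Finset.sum_range_succ',
      Finset.mul_sum, sub_eq_neg_add, ← Finset.sum_neg_distrib]
    simp only [List.eraseIdx_cons_succ, List.eraseIdx_cons_zero, wedgeList_cons, pow_succ,
      pow_zero, one_smul, mul_smul_comm, mul_neg_one, neg_smul]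

lemma der_eq_map_fst_contractLeft_snd {p : ℕ} (ω : Fin p → W) :
    der F ω = ExteriorAlgebra.map (LinearMap.fst F W F)
      (contractLeft (Q := 0) (LinearMap.snd F W F) (wedge F fun i => (ω i, (1 : F)))) := by
  rw [wedge, contractLeft_wedgeList _ _ (by simp), map_sum, List.length_ofFn, der_eq_sum_range]
  refine Finset.sum_congr rfl fun k _ => ?_
  rw [map_smul, map_wedgeList, ← List.eraseIdx_map, List.map_ofFn]
  rfl

lemma der_eq_zero_of_not_linearIndependent {p : ℕ} (ω : Fin p → W)
    (h : ¬ LinearIndependent F fun i => (ω i, (1 : F))) : der F ω = 0 := by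
  rw [der_eq_map_fst_contractLeft_snd, wedge, wedgeList_ofFn,
    (ιMulti F p).map_linearDependent _ h, map_zero, map_zero]

lemma der_eq_zero_of_sum_smul_eq_zero {p : ℕ} (ω : Fin p → W) (a : Fin p → F) (ha : a ≠ 0)
    (hsum : ∑ i, a i = 0) (hrel : ∑ i, a i • ω i = 0) : der F ω = 0 := by
  refine der_eq_zero_of_not_linearIndependent ω fun hli => ha ?_
  refine funext (Fintype.linearIndependent_iff.mp hli a ?_)
  simp only [Prod.smul_mk, smul_eq_mul, mul_one]
  exact Prod.ext (by simpa [Prod.fst_sum] using hrel) (by simpa [Prod.snd_sum] using hsum)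

end Wedge

lemma smul_dlog {K : Type} [Field K] {ℓ : ℕ} {f : Fq K ℓ} (hf : f ≠ 0) :
    f • dlog K ℓ f = KaehlerDifferential.D K (Fq K ℓ) f := by
  rw [dlog, smul_smul, mul_inv_cancel₀ hf, one_smul]

theorem der_dlog_eq_zero_of_linear_relation_general {K : Type} [Field K] {ℓ : ℕ} {p : ℕ}
    (f : Fin p → Fq K ℓ)
    (hf : ∀ i, f i ∉ Set.range (algebraMap K (Fq K ℓ)))
    (c : Fin p → K) (hc : c ≠ 0)
    (hrel : (∑ i, algebraMap K (Fq K ℓ) (c i) * f i) = 0) :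
    der (Fq K ℓ) (fun i => dlog K ℓ (f i)) = 0 := by
  have hf0 : ∀ i, f i ≠ 0 := fun i h => hf i ⟨0, by rw [map_zero, h]⟩
  obtain ⟨j, hj⟩ := Function.ne_iff.mp hc
  refine der_eq_zero_of_sum_smul_eq_zero _ (fun i => algebraMap K (Fq K ℓ) (c i) * f i)
    (Function.ne_iff.mpr ⟨j, mul_ne_zero (by simpa using hj) (hf0 j)⟩) hrel ?_
  calc ∑ i, (algebraMap K (Fq K ℓ) (c i) * f i) • dlog K ℓ (f i)
      = ∑ i, c i • KaehlerDifferential.D K (Fq K ℓ) (f i) := by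
        simp_rw [mul_smul, smul_dlog (hf0 _), algebraMap_smul]
    _ = KaehlerDifferential.D K (Fq K ℓ) (∑ i, algebraMap K (Fq K ℓ) (c i) * f i) := by
        rw [map_sum]
        exact Finset.sum_congr rfl fun i _ => by rw [← Algebra.smul_def, Derivation.map_smul]
    _ = 0 := by rw [hrel, map_zero]

/-- If `c₁ f₁ + ⋯ + c_p f_p = 0` for constants `c_i ∈ K` not all zero, then
`∂[dlog f₁ : ⋯ : dlog f_p] = 0`. -/
theorem der_dlog_eq_zero_of_linear_relation {K : Type} [Field K] [CharZero K] {ℓ : ℕ} {p : ℕ}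
    (hp : 2 ≤ p) (f : Fin p → Fq K ℓ)
    (hf : ∀ i, f i ∉ Set.range (algebraMap K (Fq K ℓ)))
    (c : Fin p → K) (hc : c ≠ 0)
    (hrel : (∑ i, algebraMap K (Fq K ℓ) (c i) * f i) = 0) :
    der (Fq K ℓ) (fun i => dlog K ℓ (f i)) = 0 :=
  der_dlog_eq_zero_of_linear_relation_general f hf c hc hrel
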